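/- For every n ≥ 2, every 1 ≤ i ≤ n and every natural number j, the number of minimal factorizations F ∈ 𝔐_n with T_i(F) = j equals the number of minimal factorizations F ∈ 𝔐_n with T_1(F) = j. -/

import Mathlib

/-- `F` is a minimal factorization of size `n`, i.e. a factorization of the cycle
`(1,2,…,n)` (represented as `finRotate n` on `Fin n`, where the element `i ∈ {1,…,n}`
corresponds to the index `i-1 : Fin n`) into `n-1` transpositions: each `F k` is a
transposition and the left-to-right product `τ₁ τ₂ ⋯ τ_{n-1}` (apply `τ₁` first)
equals the cycle. -/
def IsMinFact (n : ℕ) (F : Fin (n - 1) → Equiv.Perm (Fin n)) : Prop :=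
  (∀ k, (F k).IsSwap) ∧ (List.ofFn F).reverse.prod = finRotate n

/-- `T(F, x)`: the number of transpositions in `F` moving the element represented by `x`. -/
def Tcount {n : ℕ} (F : Fin (n - 1) → Equiv.Perm (Fin n)) (x : Fin n) : ℕ :=
  (Finset.univ.filter fun k : Fin (n - 1) => F k x ≠ x).card

/-- `M(F, x)`: the number of indices `1 ≤ k ≤ n-1` with `τ₁⋯τ_{k-1}(x) ≠ τ₁⋯τ_k(x)`,
i.e. the number of transpositions affecting the trajectory of `x` (left-to-right
partial products, so `τ₁⋯τ_k` is the product of the first `k` entries, applied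
`τ₁` first). -/
def Mcount {n : ℕ} (F : Fin (n - 1) → Equiv.Perm (Fin n)) (x : Fin n) : ℕ :=
  (Finset.univ.filter fun k : Fin (n - 1) =>
    ((List.ofFn F).take k.val).reverse.prod x ≠
      ((List.ofFn F).take (k.val + 1)).reverse.prod x).card

/-!
Conjugating every factor by a permutation `σ` that commutes with the long cycle `c_n`
maps minimal factorizations bijectively to minimal factorizations, and the factors moving
`σ x` in the new factorization are exactly those moving `x` in the old one. Taking
`σ = c_n ^ (i - 1)`, which sends `1` to `i`, gives the theorem.
-/

open Equiv

section Conjugation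

variable {n : ℕ} (σ : Perm (Fin n))

lemma isMinFact_conj_iff (hσ : Commute σ (finRotate n)) {F : Fin (n - 1) → Perm (Fin n)} :
    IsMinFact n (fun k => MulAut.conj σ (F k)) ↔ IsMinFact n F := by
  have hswap (k : Fin (n - 1)) : (MulAut.conj σ (F k)).IsSwap ↔ (F k).IsSwap := by
    simp only [Perm.isSwap_iff_cycleType, MulAut.conj_apply, Perm.cycleType_conj]
  have hprod : (List.ofFn fun k => MulAut.conj σ (F k)).reverse.prod =
      MulAut.conj σ (List.ofFn F).reverse.prod := by
    rw [map_list_prod, List.map_reverse, List.map_ofFn]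
    rfl
  have hcycle : MulAut.conj σ (finRotate n) = finRotate n := by
    rw [MulAut.conj_apply, hσ.eq, mul_inv_cancel_right]
  simp only [IsMinFact, hswap, hprod]
  conv_lhs => rw [← hcycle, (MulAut.conj σ).injective.eq_iff]

lemma tcount_conj (F : Fin (n - 1) → Perm (Fin n)) (x : Fin n) :
    Tcount (fun k => MulAut.conj σ (F k)) (σ x) = Tcount F x := by
  simp only [Tcount, MulAut.conj_apply, Perm.mul_apply, Perm.coe_inv, symm_apply_apply, ne_eq,
    σ.injective.eq_iff]

lemma card_isMinFact_tcount_conj (hσ : Commute σ (finRotate n)) (x : Fin n) (j : ℕ) :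
    Nat.card {F : Fin (n - 1) → Perm (Fin n) // IsMinFact n F ∧ Tcount F (σ x) = j} =
      Nat.card {F : Fin (n - 1) → Perm (Fin n) // IsMinFact n F ∧ Tcount F x = j} := by
  refine (Nat.card_congr <|
    (Equiv.piCongrRight fun _ => (MulAut.conj σ).toEquiv).subtypeEquiv fun F => ?_).symm
  change _ ↔ IsMinFact n (fun k => MulAut.conj σ (F k)) ∧
    Tcount (fun k => MulAut.conj σ (F k)) (σ x) = j
  rw [isMinFact_conj_iff σ hσ, tcount_conj]

end Conjugation

lemma finRotate_pow_apply_zero {n m : ℕ} (hm : m < n) :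
    (finRotate n ^ m) ⟨0, by omega⟩ = ⟨m, hm⟩ := by
  induction m with
  | zero => rfl
  | succ m ih =>
    obtain ⟨n, rfl⟩ : ∃ n', n = n' + 1 := ⟨n - 1, by omega⟩
    rw [pow_succ', Perm.mul_apply, ih (by omega), finRotate_of_lt (by omega)]

/-- for `1 ≤ i ≤ n`, the number of minimal factorizations with
`T_i = j` equals the number of minimal factorizations with `T_1 = j` (element `i`
of `{1,…,n}` is the index `i-1 : Fin n`). -/
theorem card_Ti_eq_card_T1 (n i j : ℕ) (hi1 : 1 ≤ i) (hi2 : i ≤ n) :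
    Nat.card {F : Fin (n - 1) → Equiv.Perm (Fin n) //
      IsMinFact n F ∧ Tcount F ⟨i - 1, by omega⟩ = j} =
    Nat.card {F : Fin (n - 1) → Equiv.Perm (Fin n) //
      IsMinFact n F ∧ Tcount F ⟨0, by omega⟩ = j} := by
  rw [← finRotate_pow_apply_zero (show i - 1 < n by omega)]
  exact card_isMinFact_tcount_conj _ ((Commute.refl _).pow_left _) _ j
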